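/- arXiv:2305.06101 — 10 statements merged into one kernel-verified Lean document; each statement's English description precedes it below -/
import Mathlib

section
/- Let p ≥ 1 and r ≥ 0 be integers. Let C ⊆ {1,−1}^p be such that every w ∈ {1,−1}^p is within Hamming distance r of some element of C, and let Ĉ ⊆ C be such that for every c ∈ C, either c ∈ Ĉ or −c ∈ Ĉ. Then for every w ∈ {1,−1}^p there exist c ∈ Ĉ, a sign ε ∈ {1,−1}, and a set J ⊆ {1,…,p} with |J| ≤ r, such that for all x ∈ ℝ^p: ∑_{i=1}^p w_i x_i = ε·∑_{i=1}^p c_i x_i + 2·∑_{j∈J} w_j x_j. -/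
/-- Decoding identity of the low-access protocol built from a binary covering code `C`
(in `{±1}`-representation) of length `p` and covering radius `r`, with `Ĉ ⊆ C` containing
at least one of each pair `{c, -c}`. -/
theorem stmt_1 (p : ℕ) (hp : 1 ≤ p) (r : ℕ)
    (C : Set (Fin p → ℝ)) (hC : ∀ c ∈ C, ∀ i, c i = 1 ∨ c i = -1)
    (hcover : ∀ w : Fin p → ℝ, (∀ i, w i = 1 ∨ w i = -1) →
      ∃ c ∈ C, {i : Fin p | w i ≠ c i}.ncard ≤ r)
    (Chat : Set (Fin p → ℝ)) (hsub : Chat ⊆ C)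
    (hhat : ∀ c ∈ C, c ∈ Chat ∨ -c ∈ Chat) :
    ∀ w : Fin p → ℝ, (∀ i, w i = 1 ∨ w i = -1) →
      ∃ c ∈ Chat, ∃ ε : ℝ, (ε = 1 ∨ ε = -1) ∧ ∃ J : Finset (Fin p), J.card ≤ r ∧
        ∀ x : Fin p → ℝ,
          ∑ i, w i * x i = ε * ∑ i, c i * x i + 2 * ∑ j ∈ J, w j * x j := by
  intro w hw
  obtain ⟨c, hcC, hcard⟩ := hcover w hw
  classical
  set J : Finset (Fin p) := Finset.univ.filter (fun i => w i ≠ c i) with hJ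
  have hJcard : J.card ≤ r := by
    have h1 : {i : Fin p | w i ≠ c i}.ncard = J.card := by
      rw [Set.ncard_eq_toFinset_card']
      congr 1
      ext i
      simp [hJ]
    omega
  have key : ∀ x : Fin p → ℝ,
      ∑ i, w i * x i = ∑ i, c i * x i + 2 * ∑ j ∈ J, w j * x j := by
    intro x
    rw [Finset.mul_sum, hJ, Finset.sum_filter, ← Finset.sum_add_distrib]
    apply Finset.sum_congr rfl
    intro i _
    by_cases h : w i = c i
    · simp [h]
    · have hci := hC c hcC i
      have hwi := hw i
      have hcw : c i = - w i := by
        rcases hwi with h1 | h1 <;> rcases hci with h2 | h2 <;> simp_all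
      rw [if_pos h, hcw]; ring
  rcases hhat c hcC with hc | hc
  · refine ⟨c, hc, 1, Or.inl rfl, J, hJcard, fun x => ?_⟩
    rw [key x]; ring
  · refine ⟨-c, hc, -1, Or.inr rfl, J, hJcard, fun x => ?_⟩
    rw [key x]
    simp only [Pi.neg_apply, neg_mul, Finset.sum_neg_distrib]
    ring
end

section
/- Let n, k, ℓ be positive integers with ℓ ≤ n, and let g_1, …, g_n ∈ ℝ^k. Suppose that for every w ∈ {1,−1}^k there exists a subset S ⊆ {1,…,n} with |S| ≤ ℓ such that w lies in the real linear span of {g_i : i ∈ S}. Then C(n,ℓ)·2^ℓ ≥ 2^k, where C(n,ℓ) denotes the binomial coefficient n choose ℓ. -/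
/-!
A sign vector `w` is recovered from some `ℓ`-subset `S` of servers, i.e. lies in a subspace
`span (g '' S)` of dimension at most `ℓ`. A subspace `V` of dimension `d` contains at most `2 ^ d`
sign vectors: some `d` coordinates determine the vectors of `V`, because the coordinate
functionals restricted to `V` span its `d`-dimensional dual. Summing over the `C(n, ℓ)` subsets
`S` covers all `2 ^ k` sign vectors.
-/

open Finset Module

variable {K ι : Type*} [Field K] [Fintype ι]

theorem Submodule.exists_finset_card_le_finrank_injOn_restrict (V : Submodule K (ι → K)) :
    ∃ T : Finset ι, #T ≤ finrank K V ∧ Set.InjOn (fun (v : ι → K) (i : T) => v i) V := by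
  classical
  let φ : ι → Dual K V := fun i => (LinearMap.proj i).comp V.subtype
  obtain ⟨b, -, -, hspan, hli⟩ :=
    exists_linearIndepOn_extension (linearIndepOn_empty K φ) (Set.empty_subset Set.univ)
  refine ⟨b.toFinset, ?_, fun v hv w hw hvw => ?_⟩
  · rw [Set.toFinset_card, ← Subspace.dual_finrank_eq]
    exact hli.fintype_card_le_finrank
  · let u : V := ⟨v - w, V.sub_mem hv hw⟩
    have hker : span K (φ '' b) ≤ LinearMap.ker (Dual.eval K V u) := by
      rw [Submodule.span_le]
      rintro _ ⟨i, hi, rfl⟩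
      have := congrFun hvw ⟨i, Set.mem_toFinset.mpr hi⟩
      simpa [φ, u, sub_eq_zero] using this
    refine sub_eq_zero.mp (funext fun i => ?_)
    exact hker (hspan ⟨i, Set.mem_univ i, rfl⟩)

theorem Submodule.card_filter_mem_piFinset_le_pow [DecidableEq ι] (V : Submodule K (ι → K))
    [DecidablePred (· ∈ V)] (s : Finset K) :
    #{w ∈ Fintype.piFinset fun _ => s | w ∈ V} ≤ #s ^ finrank K V := by
  rcases s.eq_empty_or_nonempty with rfl | hs
  · cases isEmpty_or_nonempty ι
    · exact (card_filter_le _ _).trans (by simp [finrank_zero_of_subsingleton])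
    · simp
  obtain ⟨T, hT, hinj⟩ := V.exists_finset_card_le_finrank_injOn_restrict
  calc #{w ∈ Fintype.piFinset fun _ => s | w ∈ V}
      ≤ #(Fintype.piFinset fun _ : T => s) := by
        refine card_le_card_of_injOn _ (fun w hw => ?_) (hinj.mono fun w hw => ?_)
        · exact Fintype.mem_piFinset.mpr fun i => Fintype.mem_piFinset.mp (mem_filter.mp hw).1 i
        · exact (mem_filter.mp hw).2
    _ = #s ^ #T := by simp
    _ ≤ #s ^ finrank K V := Nat.pow_le_pow_right hs.card_pos hT

theorem finrank_span_image_finset_le {κ M : Type*} [AddCommGroup M] [Module K M]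
    (g : κ → M) (S : Finset κ) : finrank K (Submodule.span K (g '' S)) ≤ #S := by
  classical
  rw [← coe_image]
  exact (finrank_span_finset_le_card _).trans card_image_le

theorem stmt_2_general (n k ℓ : ℕ) (hℓn : ℓ ≤ n)
    (g : Fin n → (Fin k → ℝ))
    (h : ∀ w : Fin k → ℝ, (∀ i, w i = 1 ∨ w i = -1) →
      ∃ S : Finset (Fin n), S.card ≤ ℓ ∧ w ∈ Submodule.span ℝ (g '' ↑S)) :
    Nat.choose n ℓ * 2 ^ ℓ ≥ 2 ^ k := by
  classical
  have hpair : #({1, -1} : Finset ℝ) = 2 := card_pair (by norm_num)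
  let signs : Finset (Fin k → ℝ) := Fintype.piFinset fun _ => {1, -1}
  have hcover : signs ⊆ (powersetCard ℓ univ).biUnion
      fun S : Finset (Fin n) => {w ∈ signs | w ∈ Submodule.span ℝ (g '' S)} := by
    intro w hw
    obtain ⟨S, hS, hwS⟩ := h w (by simpa [signs] using hw)
    obtain ⟨S', hSS', hS'⟩ := exists_superset_card_eq hS (by simpa using hℓn)
    exact mem_biUnion.mpr ⟨S', mem_powersetCard.mpr ⟨subset_univ _, hS'⟩,
      mem_filter.mpr ⟨hw, Submodule.span_mono (Set.image_mono hSS') hwS⟩⟩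
  have hcount : ∀ S ∈ powersetCard ℓ (univ : Finset (Fin n)),
      #{w ∈ signs | w ∈ Submodule.span ℝ (g '' S)} ≤ 2 ^ ℓ := by
    intro S hS
    calc _ ≤ #({1, -1} : Finset ℝ) ^ finrank ℝ (Submodule.span ℝ (g '' S)) :=
          Submodule.card_filter_mem_piFinset_le_pow _ _
      _ ≤ 2 ^ ℓ := by
          rw [hpair]
          exact Nat.pow_le_pow_right two_pos
            ((finrank_span_image_finset_le g S).trans (mem_powersetCard.mp hS).2.le)
  calc 2 ^ k = #signs := by simp [signs, hpair]
    _ ≤ _ := card_le_card hcover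
    _ ≤ _ := card_biUnion_le_card_mul _ _ _ hcount
    _ = n.choose ℓ * 2 ^ ℓ := by simp

/-- Lower bound on the access parameter of `{±1}`-protocols with linear decoding. -/
theorem stmt_2 (n k ℓ : ℕ) (hn : 0 < n) (hk : 0 < k) (hℓ : 0 < ℓ) (hℓn : ℓ ≤ n)
    (g : Fin n → (Fin k → ℝ))
    (h : ∀ w : Fin k → ℝ, (∀ i, w i = 1 ∨ w i = -1) →
      ∃ S : Finset (Fin n), S.card ≤ ℓ ∧ w ∈ Submodule.span ℝ (g '' ↑S)) :
    Nat.choose n ℓ * 2 ^ ℓ ≥ 2 ^ k :=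
  stmt_2_general n k ℓ hℓn g h
end

section
/- Let A ⊆ ℝ be a finite nonempty set, let n, k, ℓ be positive integers with ℓ ≤ n, and let g_1, …, g_n ∈ ℝ^k. Suppose that for every w ∈ A^k there exists a subset S ⊆ {1,…,n} with |S| ≤ ℓ such that w lies in the real linear span of {g_i : i ∈ S}. Then C(n,ℓ)·|A|^ℓ ≥ |A|^k, where C(n,ℓ) denotes the binomial coefficient n choose ℓ. -/
open Submodule Module

/-- A finite-dimensional subspace of `Fin k → ℝ` of finrank `≤ m` is separated by
some set of at most `m` coordinates. -/
lemma key_sep (k : ℕ) : ∀ (m : ℕ) (V : Submodule ℝ (Fin k → ℝ)), finrank ℝ V ≤ m →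
    ∃ T : Finset (Fin k), T.card ≤ m ∧ ∀ v ∈ V, (∀ i ∈ T, v i = 0) → v = 0 := by
  intro m
  induction m with
  | zero =>
    intro V hV
    have hb : V = ⊥ := Submodule.finrank_eq_zero.mp (Nat.le_zero.mp hV)
    exact ⟨∅, le_rfl, fun v hv _ => by simpa [hb] using hv⟩
  | succ m ih =>
    intro V hV
    by_cases hbot : V = ⊥
    · exact ⟨∅, Nat.zero_le _, fun v hv _ => by simpa [hbot] using hv⟩
    · obtain ⟨v, hvV, hv0⟩ := Submodule.exists_mem_ne_zero_of_ne_bot hbot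
      obtain ⟨i₀, hi₀⟩ : ∃ i, v i ≠ 0 := by
        by_contra hc; push_neg at hc; exact hv0 (funext hc)
      set V' := V ⊓ LinearMap.ker (LinearMap.proj i₀ : (Fin k → ℝ) →ₗ[ℝ] ℝ) with hV'
      have hlt : V' < V := by
        refine lt_of_le_of_ne inf_le_left (fun hEq => hi₀ ?_)
        have : v ∈ V' := hEq ▸ hvV
        simpa using this.2
      have hrk : finrank ℝ V' < finrank ℝ V := Submodule.finrank_lt_finrank_of_lt hlt
      obtain ⟨T', hT'c, hT'⟩ := ih V' (by omega)
      refine ⟨insert i₀ T', (Finset.card_insert_le _ _).trans (by omega), ?_⟩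
      intro u hu hz
      have hu' : u ∈ V' := ⟨hu, by simpa using hz i₀ (Finset.mem_insert_self _ _)⟩
      exact hT' u hu' (fun i hi => hz i (Finset.mem_insert_of_mem hi))

/-- Lower bound on the access parameter of `A`-protocols with linear decoding. -/
theorem stmt_3 (A : Finset ℝ) (hA : A.Nonempty)
    (n k ℓ : ℕ) (hn : 0 < n) (hk : 0 < k) (hℓ : 0 < ℓ) (hℓn : ℓ ≤ n)
    (g : Fin n → (Fin k → ℝ))
    (h : ∀ w : Fin k → ℝ, (∀ i, w i ∈ A) →
      ∃ S : Finset (Fin n), S.card ≤ ℓ ∧ w ∈ Submodule.span ℝ (g '' ↑S)) :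
    Nat.choose n ℓ * A.card ^ ℓ ≥ A.card ^ k := by
  classical
  -- choose separating coordinates for each S
  have hTex : ∀ S : Finset (Fin n), ∃ T : Finset (Fin k), T.card ≤ S.card ∧
      ∀ v ∈ span ℝ (g '' ↑S), (∀ i ∈ T, v i = 0) → v = 0 := by
    intro S
    have hfr : finrank ℝ (span ℝ (g '' ↑S)) ≤ S.card := by
      have h1 : g '' ↑S = ((S.image g : Finset (Fin k → ℝ)) : Set (Fin k → ℝ)) := by
        simp [Finset.coe_image]
      rw [h1]
      exact (finrank_span_finset_le_card (S.image g)).trans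
        (Nat.cast_le.mp (by exact_mod_cast Finset.card_image_le))
    exact key_sep k S.card (span ℝ (g '' ↑S)) hfr
  choose T hTcard hTsep using hTex
  -- choose a set of card exactly ℓ for each w
  have hSex : ∀ w : Fin k → ℝ, ∃ S : Finset (Fin n), S.card = ℓ ∧
      ((∀ i, w i ∈ A) → w ∈ span ℝ (g '' ↑S)) := by
    intro w
    by_cases hw : ∀ i, w i ∈ A
    · obtain ⟨S₀, hS₀c, hS₀m⟩ := h w hw
      obtain ⟨S, hSsub, hScard⟩ := Finset.exists_superset_card_eq hS₀c
        (by simpa using hℓn)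
      refine ⟨S, hScard, fun _ => ?_⟩
      exact span_mono (Set.image_mono (by exact_mod_cast hSsub)) hS₀m
    · obtain ⟨S, _, hScard⟩ := Finset.exists_superset_card_eq
        (show (∅ : Finset (Fin n)).card ≤ ℓ by simp) (by simpa using hℓn)
      exact ⟨S, hScard, fun hw' => absurd hw' hw⟩
  choose Sel hSelcard hSelmem using hSex
  -- counting
  set W : Finset (Fin k → ℝ) := Fintype.piFinset (fun _ : Fin k => A) with hW
  have hWcard : W.card = A.card ^ k := by
    simp [hW, Fintype.card_piFinset]
  set D : Finset (Σ S : Finset (Fin n), ∀ a ∈ T S, ℝ) :=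
    ((Finset.univ : Finset (Fin n)).powersetCard ℓ).sigma
      (fun S => (T S).pi (fun _ => A)) with hD
  have hmap : ∀ w ∈ W, (⟨Sel w, fun a _ => w a⟩ : Σ S : Finset (Fin n), ∀ a ∈ T S, ℝ) ∈ D := by
    intro w hw
    have hwA : ∀ i, w i ∈ A := by
      intro i; exact (Fintype.mem_piFinset.mp hw) i
    refine Finset.mem_sigma.mpr ⟨?_, ?_⟩
    · exact Finset.mem_powersetCard.mpr ⟨Finset.subset_univ _, hSelcard w⟩
    · exact Finset.mem_pi.mpr (fun a _ => hwA a)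
  have hinj : Set.InjOn (fun w => (⟨Sel w, fun a _ => w a⟩ : Σ S : Finset (Fin n), ∀ a ∈ T S, ℝ))
      (W : Set (Fin k → ℝ)) := by
    intro w1 hw1 w2 hw2 hF
    have h1 : Sel w1 = Sel w2 := congrArg Sigma.fst hF
    have h2 : HEq (fun a (_ : a ∈ T (Sel w1)) => w1 a) (fun a (_ : a ∈ T (Sel w2)) => w2 a) :=
      (Sigma.mk.inj_iff.mp hF).2
    rw [h1] at h2
    have heqf := eq_of_heq h2
    have hcoord : ∀ a ∈ T (Sel w2), w1 a = w2 a := by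
      intro a ha
      exact congrFun (congrFun heqf a) ha
    have hw1A : ∀ i, w1 i ∈ A := fun i => (Fintype.mem_piFinset.mp hw1) i
    have hw2A : ∀ i, w2 i ∈ A := fun i => (Fintype.mem_piFinset.mp hw2) i
    have hm1 : w1 ∈ span ℝ (g '' ↑(Sel w2)) := h1 ▸ hSelmem w1 hw1A
    have hm2 : w2 ∈ span ℝ (g '' ↑(Sel w2)) := hSelmem w2 hw2A
    have hsub : w1 - w2 ∈ span ℝ (g '' ↑(Sel w2)) := sub_mem hm1 hm2
    have : w1 - w2 = 0 := hTsep (Sel w2) _ hsub (by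
      intro i hi; simp [hcoord i hi])
    funext i
    have := congrFun this i
    simpa [sub_eq_zero] using this
  have hle : W.card ≤ D.card := Finset.card_le_card_of_injOn _ hmap hinj
  have hDcard : D.card ≤ Nat.choose n ℓ * A.card ^ ℓ := by
    rw [hD, Finset.card_sigma]
    have hbound : ∀ S ∈ (Finset.univ : Finset (Fin n)).powersetCard ℓ,
        ((T S).pi (fun _ => A)).card ≤ A.card ^ ℓ := by
      intro S hS
      rw [Finset.card_pi]
      have hc : (T S).card ≤ ℓ := (hTcard S).trans
        (le_of_eq (Finset.mem_powersetCard.mp hS).2)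
      calc ∏ _a ∈ T S, A.card = A.card ^ (T S).card := by
            rw [Finset.prod_const]
        _ ≤ A.card ^ ℓ := Nat.pow_le_pow_right hA.card_pos hc
    calc ∑ S ∈ (Finset.univ : Finset (Fin n)).powersetCard ℓ, ((T S).pi (fun _ => A)).card
        ≤ ((Finset.univ : Finset (Fin n)).powersetCard ℓ).card * (A.card ^ ℓ) := by
          exact Finset.sum_le_card_nsmul _ _ _ hbound
      _ = Nat.choose n ℓ * A.card ^ ℓ := by
          rw [Finset.card_powersetCard]; simp
  calc A.card ^ k = W.card := hWcard.symm
    _ ≤ D.card := hle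
    _ ≤ Nat.choose n ℓ * A.card ^ ℓ := hDcard
end

section
/- Let a < b < c < d be real numbers and A = {a,b,c,d}. If a + d = b + c then C(A) = 2, and if a + d ≠ b + c then C(A) = 3. -/
set_option maxHeartbeats 2000000

/-- The (additive) complexity of a set `A` of reals: the smallest positive integer `θ`
for which there exist reals `x 1, ..., x θ, y 1, ..., y θ` with
`A ⊆ {x 1, y 1} + ... + {x θ, y θ}` (Minkowski sumset). -/
noncomputable def complexity (A : Set ℝ) : ℕ :=
  sInf {θ : ℕ | 0 < θ ∧ ∃ x y : Fin θ → ℝ,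
    A ⊆ {t : ℝ | ∃ z : Fin θ → ℝ, (∀ i, z i = x i ∨ z i = y i) ∧ t = ∑ i, z i}}

/-- Complexity of sets of size `4`: `2` if the extreme elements sum to the sum of the
middle ones, and `3` otherwise. -/
theorem stmt_7 (a b c d : ℝ) (hab : a < b) (hbc : b < c) (hcd : c < d) :
    (a + d = b + c → complexity {a, b, c, d} = 2) ∧
    (a + d ≠ b + c → complexity {a, b, c, d} = 3) := by
  set S := {θ : ℕ | 0 < θ ∧ ∃ x y : Fin θ → ℝ,
    ({a, b, c, d} : Set ℝ) ⊆ {t : ℝ | ∃ z : Fin θ → ℝ,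
      (∀ i, z i = x i ∨ z i = y i) ∧ t = ∑ i, z i}} with hSdef
  have hc : complexity {a, b, c, d} = sInf S := rfl
  -- 1 is never in S
  have not1 : 1 ∉ S := by
    rintro ⟨-, x, y, hsub⟩
    have ga : a ∈ ({a, b, c, d} : Set ℝ) := by simp
    have gb : b ∈ ({a, b, c, d} : Set ℝ) := by simp
    have gc : c ∈ ({a, b, c, d} : Set ℝ) := by simp
    obtain ⟨za, hza, ea⟩ := hsub ga
    obtain ⟨zb, hzb, eb⟩ := hsub gb
    obtain ⟨zc, hzc, ec⟩ := hsub gc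
    rw [Fin.sum_univ_one] at ea eb ec
    rcases hza 0 with h|h <;> rw [h] at ea <;>
      rcases hzb 0 with h'|h' <;> rw [h'] at eb <;>
        rcases hzc 0 with h''|h'' <;> rw [h''] at ec <;> linarith
  -- 3 is always in S
  have mem3 : 3 ∈ S := by
    refine ⟨by norm_num, ![a, 0, 0], ![b, c - a, d - c], ?_⟩
    intro t ht
    simp only [Set.mem_insert_iff, Set.mem_singleton_iff] at ht
    rcases ht with h | h | h | h
    · exact ⟨![a, 0, 0], by intro i; fin_cases i <;> simp, by
        rw [Fin.sum_univ_three]; simp [h]⟩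
    · exact ⟨![b, 0, 0], by intro i; fin_cases i <;> simp, by
        rw [Fin.sum_univ_three]; simp [h]⟩
    · exact ⟨![a, c - a, 0], by intro i; fin_cases i <;> simp, by
        rw [Fin.sum_univ_three]; simp [h]⟩
    · exact ⟨![a, c - a, d - c], by intro i; fin_cases i <;> simp, by
        rw [Fin.sum_univ_three]; simp [h]⟩
  constructor
  · intro hsum
    -- 2 ∈ S
    have mem2 : 2 ∈ S := by
      refine ⟨by norm_num, ![a, 0], ![b, d - b], ?_⟩
      intro t ht
      simp only [Set.mem_insert_iff, Set.mem_singleton_iff] at ht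
      rcases ht with h | h | h | h
      · exact ⟨![a, 0], by intro i; fin_cases i <;> simp, by
          rw [Fin.sum_univ_two]; simp [h]⟩
      · exact ⟨![b, 0], by intro i; fin_cases i <;> simp, by
          rw [Fin.sum_univ_two]; simp [h]⟩
      · exact ⟨![a, d - b], by intro i; fin_cases i <;> simp, by
          rw [Fin.sum_univ_two]; simp [h]; linarith⟩
      · exact ⟨![b, d - b], by intro i; fin_cases i <;> simp, by
          rw [Fin.sum_univ_two]; simp [h]⟩
    have hle : sInf S ≤ 2 := Nat.sInf_le mem2
    have hmem := Nat.sInf_mem ⟨2, mem2⟩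
    have h0 : 0 < sInf S := hmem.1
    have h1 : sInf S ≠ 1 := fun h => not1 (h ▸ hmem)
    rw [hc]; omega
  · intro hne
    -- 2 ∉ S
    have not2 : 2 ∉ S := by
      rintro ⟨-, x, y, hsub⟩
      have key : ∀ t : ℝ, t ∈ ({a, b, c, d} : Set ℝ) →
          t = x 0 + x 1 ∨ t = x 0 + y 1 ∨ t = y 0 + x 1 ∨ t = y 0 + y 1 := by
        intro t ht
        obtain ⟨z, hz, e⟩ := hsub ht
        rw [Fin.sum_univ_two] at e
        rcases hz 0 with h0|h0 <;> rcases hz 1 with h1|h1 <;>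
          rw [h0, h1] at e <;> tauto
      have ea := key a (by simp)
      have eb := key b (by simp)
      have ec := key c (by simp)
      have ed := key d (by simp)
      rcases lt_or_gt_of_ne hne with hlt | hlt <;>
      rcases ea with ea|ea|ea|ea <;> rcases eb with eb|eb|eb|eb <;>
        rcases ec with ec|ec|ec|ec <;> rcases ed with ed|ed|ed|ed <;>
        linarith
    have hle : sInf S ≤ 3 := Nat.sInf_le mem3
    have hmem := Nat.sInf_mem ⟨3, mem3⟩
    have h0 : 0 < sInf S := hmem.1
    have h1 : sInf S ≠ 1 := fun h => not1 (h ▸ hmem)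
    have h2 : sInf S ≠ 2 := fun h => not2 (h ▸ hmem)
    rw [hc]; omega
end

section
/- Let A ⊆ ℝ be a finite set with |A| = M ≥ 1, and let vec(A) ∈ ℝ^M be the column vector listing the elements of A in increasing order. Then C(A) equals the smallest positive integer θ for which there exists a matrix B with entries in {0,1}, of size M × (θ+1), such that B has a column all of whose entries equal 1, and vec(A) lies in the column span of B over ℝ. -/
/-- Algebraic definition of complexity: smallest positive `θ` such that `vec(A)` lies in
the real column span of an `M × (θ+1)` binary matrix containing an all-ones column. -/
theorem stmt_10 (A : Finset ℝ) (M : ℕ) (hM : 0 < M) (hcard : A.card = M)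
    (vecA : Fin M → ℝ) (hmono : StrictMono vecA) (hrange : Set.range vecA = ↑A) :
    IsLeast {θ : ℕ | 0 < θ ∧ ∃ B : Matrix (Fin M) (Fin (θ + 1)) ℝ,
        (∀ i j, B i j = 0 ∨ B i j = 1) ∧ (∃ j, ∀ i, B i j = 1) ∧
        ∃ u : Fin (θ + 1) → ℝ, B.mulVec u = vecA}
      (complexity ↑A) := by
  set S : Set ℕ := {θ : ℕ | 0 < θ ∧ ∃ x y : Fin θ → ℝ,
    (↑A : Set ℝ) ⊆ {t : ℝ | ∃ z : Fin θ → ℝ, (∀ i, z i = x i ∨ z i = y i) ∧ t = ∑ i, z i}}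
    with hS
  set T : Set ℕ := {θ : ℕ | 0 < θ ∧ ∃ B : Matrix (Fin M) (Fin (θ + 1)) ℝ,
        (∀ i j, B i j = 0 ∨ B i j = 1) ∧ (∃ j, ∀ i, B i j = 1) ∧
        ∃ u : Fin (θ + 1) → ℝ, B.mulVec u = vecA} with hT
  have hST : S = T := by
    ext θ
    constructor
    · rintro ⟨hθ, x, y, hsub⟩
      refine ⟨hθ, ?_⟩
      -- choose binary representation for each element
      have hz : ∀ i : Fin M, ∃ z : Fin θ → ℝ, (∀ j, z j = x j ∨ z j = y j) ∧
          vecA i = ∑ j, z j := by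
        intro i
        have : vecA i ∈ (↑A : Set ℝ) := by
          rw [← hrange]; exact ⟨i, rfl⟩
        exact hsub this
      choose z hz1 hz2 using hz
      refine ⟨fun i => Fin.lastCases 1 (fun j => if z i j = x j then 1 else 0),
        ?_, ⟨Fin.last θ, fun i => by simp⟩, Fin.lastCases (∑ j, y j) (fun j => x j - y j), ?_⟩
      · intro i j
        induction j using Fin.lastCases with
        | last => right; simp
        | cast j => simp only [Fin.lastCases_castSucc]; split <;> simp
      · funext i
        simp only [Matrix.mulVec, dotProduct]
        rw [Fin.sum_univ_castSucc]
        simp only [Fin.lastCases_castSucc, Fin.lastCases_last, one_mul]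
        rw [hz2 i, ← Finset.sum_add_distrib]
        refine Finset.sum_congr rfl fun j _ => ?_
        rcases hz1 i j with h | h <;> rw [h]
        · simp
        · by_cases hxy : y j = x j
          · simp only [hxy, if_pos rfl, one_mul]; linarith
          · simp [hxy]
    · rintro ⟨hθ, B, hbin, ⟨j₀, hj₀⟩, u, hu⟩
      refine ⟨hθ, fun i => u (j₀.succAbove i) + (if i = ⟨0, hθ⟩ then u j₀ else 0),
        fun i => (if i = ⟨0, hθ⟩ then u j₀ else 0), ?_⟩
      intro a ha
      obtain ⟨k, hk⟩ : ∃ k, vecA k = a := by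
        have : a ∈ Set.range vecA := by rw [hrange]; exact ha
        exact this
      refine ⟨fun i => B k (j₀.succAbove i) * u (j₀.succAbove i) +
        (if i = ⟨0, hθ⟩ then u j₀ else 0), fun i => ?_, ?_⟩
      · rcases hbin k (j₀.succAbove i) with h | h
        · right; dsimp only; rw [h]; ring
        · left; dsimp only; rw [h]; ring
      · have hsum : ∑ i : Fin θ, (if i = ⟨0, hθ⟩ then u j₀ else 0) = u j₀ := by
          rw [Finset.sum_ite_eq' Finset.univ (⟨0, hθ⟩ : Fin θ)]
          simp
        rw [Finset.sum_add_distrib, hsum, ← hk, ← hu]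
        simp only [Matrix.mulVec, dotProduct]
        rw [Fin.sum_univ_succAbove (fun j => B k j * u j) j₀, hj₀ k, one_mul]
        ring
  have hMem : M ∈ S := by
    refine ⟨hM, vecA, fun _ => 0, fun a ha => ?_⟩
    obtain ⟨k, hk⟩ : ∃ k, vecA k = a := by
      have : a ∈ Set.range vecA := by rw [hrange]; exact ha
      exact this
    exact ⟨fun i => if i = k then vecA k else 0, fun i => by
      by_cases h : i = k <;> simp [h], by simp [← hk]⟩
  rw [hST] at hMem
  have hC : complexity ↑A = sInf T := by rw [← hST]; rfl
  rw [hC]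
  exact ⟨Nat.sInf_mem ⟨M, hMem⟩, fun θ hθ => Nat.sInf_le hθ⟩
end

section
/- Let M ≥ 2 be an integer, a ∈ ℝ, and x > 0 a real number, and let A = {a + i·x : i = 0, 1, …, M−1} be the arithmetic progression of length M with first term a and common difference x. Then C(A) = ⌈log₂ M⌉. -/
def pairSumset {θ : ℕ} (x y : Fin θ → ℝ) : Set ℝ :=
  {t : ℝ | ∃ z : Fin θ → ℝ, (∀ i, z i = x i ∨ z i = y i) ∧ t = ∑ i, z i}

def arithProg (a d : ℝ) (M : ℕ) : Set ℝ :=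
  {t : ℝ | ∃ i : ℕ, i < M ∧ t = a + (i : ℝ) * d}

lemma pairSumset_eq_range {θ : ℕ} (x y : Fin θ → ℝ) :
    pairSumset x y = Set.range fun b : Fin θ → Bool => ∑ i, if b i then y i else x i := by
  ext t
  constructor
  · rintro ⟨z, hz, rfl⟩
    refine ⟨fun i => decide (z i = y i), Finset.sum_congr rfl fun i _ => ?_⟩
    by_cases h : z i = y i
    · simp [h]
    · simp [h, ((hz i).resolve_right h).symm]
  · rintro ⟨b, rfl⟩
    exact ⟨_, fun i => by cases b i <;> simp, rfl⟩

lemma ncard_le_of_subset_pairSumset {A : Set ℝ} {θ : ℕ} {x y : Fin θ → ℝ}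
    (h : A ⊆ pairSumset x y) : A.ncard ≤ 2 ^ θ := by
  rw [pairSumset_eq_range] at h
  calc A.ncard ≤ (Set.range _).ncard := Set.ncard_le_ncard h
    _ ≤ Nat.card (Fin θ → Bool) := Finite.card_range_le _
    _ = 2 ^ θ := by simp

lemma complexity_le {A : Set ℝ} {θ : ℕ} (hθ : 0 < θ) {x y : Fin θ → ℝ}
    (h : A ⊆ pairSumset x y) : complexity A ≤ θ :=
  Nat.sInf_le ⟨hθ, x, y, h⟩

lemma clog_ncard_le_complexity {A : Set ℝ} {θ : ℕ} (hθ : 0 < θ) {x y : Fin θ → ℝ}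
    (h : A ⊆ pairSumset x y) : Nat.clog 2 A.ncard ≤ complexity A := by
  obtain ⟨-, x', y', h'⟩ :=
    Nat.sInf_mem (s := {θ | 0 < θ ∧ ∃ x y : Fin θ → ℝ, A ⊆ pairSumset x y}) ⟨θ, hθ, x, y, h⟩
  exact Nat.clog_le_of_le_pow (ncard_le_of_subset_pairSumset h')

lemma ncard_arithProg (a : ℝ) {d : ℝ} (hd : d ≠ 0) (M : ℕ) : (arithProg a d M).ncard = M := by
  have hinj : Function.Injective fun i : ℕ => a + (i : ℝ) * d := fun i j hij => by
    simpa [hd] using hij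
  have : arithProg a d M = (fun i : ℕ => a + (i : ℝ) * d) '' (Finset.range M : Set ℕ) := by
    ext t
    simp [arithProg, eq_comm]
  rw [this, Set.ncard_image_of_injective _ hinj, Set.ncard_coe_finset, Finset.card_range]

lemma arithProg_mono (a d : ℝ) {M N : ℕ} (h : M ≤ N) : arithProg a d M ⊆ arithProg a d N :=
  fun _ ⟨i, hi, ht⟩ => ⟨i, hi.trans_le h, ht⟩

lemma arithProg_sum_subset_pairSumset {θ : ℕ} (c : Fin θ → ℝ) (d : ℝ) :
    arithProg (∑ j, c j) d (2 ^ θ) ⊆ pairSumset c (c + fun j : Fin θ => 2 ^ (j : ℕ) * d) := by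
  rintro t ⟨i, hi, rfl⟩
  set digits := (finFunctionFinEquiv (m := 2) (n := θ)).symm ⟨i, hi⟩
  have hi_digits : (i : ℝ) = ∑ j, (digits j : ℝ) * 2 ^ (j : ℕ) := by
    have := finFunctionFinEquiv_apply digits
    rw [Equiv.apply_symm_apply] at this
    exact_mod_cast this
  refine ⟨fun j => c j + (digits j : ℝ) * 2 ^ (j : ℕ) * d, fun j => ?_, ?_⟩
  · rcases Fin.exists_fin_two.mp ⟨digits j, rfl⟩ with h | h <;> simp [h]
  · simp [Finset.sum_add_distrib, hi_digits, Finset.sum_mul]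

/-- Arithmetic progressions of length `M` have the lowest possible complexity
`⌈log₂ M⌉`. -/
theorem stmt_11 (M : ℕ) (hM : 2 ≤ M) (a x : ℝ) (hx : 0 < x) :
    complexity {t : ℝ | ∃ i : ℕ, i < M ∧ t = a + (i : ℝ) * x} = Nat.clog 2 M := by
  change complexity (arithProg a x M) = _
  have hθ : 0 < Nat.clog 2 M := Nat.clog_pos one_lt_two hM
  have hsum : ∑ j, (Pi.single (⟨0, hθ⟩ : Fin _) a : Fin _ → ℝ) j = a := by simp
  have hcover := (arithProg_mono a x (Nat.le_pow_clog one_lt_two M)).trans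
    (hsum ▸ arithProg_sum_subset_pairSumset _ x)
  refine le_antisymm (complexity_le hθ hcover) ?_
  simpa only [ncard_arithProg a hx.ne' M] using clog_ncard_le_complexity hθ hcover
end

section
/- Let M ≥ 3 be an integer. The set of vectors v = (v_1,…,v_M) ∈ ℝ^M with strictly increasing coordinates v_1 < v_2 < ⋯ < v_M such that the underlying set {v_1,…,v_M} has complexity strictly less than M−1 has Lebesgue measure zero in ℝ^M. -/
/-- Auxiliary linear map: given a 0/1 pattern `E`, maps `(c, d)` to the vector
`j ↦ c + ∑ i, (if E j i then d i else 0)`. -/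
noncomputable def LmapAux (M θ : ℕ) (E : Fin M → Fin θ → Bool) :
    (ℝ × (Fin θ → ℝ)) →ₗ[ℝ] (Fin M → ℝ) where
  toFun p := fun j => p.1 + ∑ i, (if E j i then (1:ℝ) else 0) * p.2 i
  map_add' p q := by
    funext j
    simp only [Prod.fst_add, Prod.snd_add, Pi.add_apply, mul_add,
      Finset.sum_add_distrib]
    ring
  map_smul' c p := by
    funext j
    simp only [Prod.smul_fst, Prod.smul_snd, Pi.smul_apply, smul_eq_mul,
      RingHom.id_apply, Finset.mul_sum, Pi.smul_apply]
    rw [mul_add, Finset.mul_sum]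
    congr 1
    apply Finset.sum_congr rfl
    intro i _
    ring


/-- Almost all strictly increasing vectors in `ℝ^M` have underlying sets of the highest
possible complexity `M - 1`. -/
theorem stmt_12 (M : ℕ) (hM : 3 ≤ M) :
    MeasureTheory.volume
      {v : Fin M → ℝ | StrictMono v ∧ complexity (Set.range v) < M - 1} = 0 := by

  classical
  have key : {v : Fin M → ℝ | StrictMono v ∧ complexity (Set.range v) < M - 1} ⊆
      ⋃ (θ : ℕ) (_ : θ + 1 < M) (E : Fin M → Fin θ → Bool),
        (LinearMap.range (LmapAux M θ E) : Set (Fin M → ℝ)) := by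
    rintro v ⟨-, hv⟩
    set A := Set.range v with hA
    -- the defining set of the infimum is nonempty (take θ = M)
    have hne : {θ : ℕ | 0 < θ ∧ ∃ x y : Fin θ → ℝ,
        A ⊆ {t : ℝ | ∃ z : Fin θ → ℝ,
          (∀ i, z i = x i ∨ z i = y i) ∧ t = ∑ i, z i}}.Nonempty := by
      refine ⟨M, by omega, fun _ => 0, v, ?_⟩
      rintro t ⟨j, rfl⟩
      refine ⟨fun i => if i = j then v j else 0, fun i => ?_, ?_⟩
      · by_cases h : i = j
        · subst h; right; simp
        · left; simp [h]
      · simp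
    have hmem : 0 < complexity A ∧ ∃ x y : Fin (complexity A) → ℝ,
        A ⊆ {t : ℝ | ∃ z : Fin (complexity A) → ℝ,
          (∀ i, z i = x i ∨ z i = y i) ∧ t = ∑ i, z i} := Nat.sInf_mem hne
    obtain ⟨hpos, x, y, hsub⟩ := hmem
    have hθM : complexity A + 1 < M := by omega
    -- choose representations
    choose z hz hsum using fun j => hsub ⟨j, rfl⟩
    refine Set.mem_iUnion.2 ⟨complexity A, Set.mem_iUnion.2 ⟨hθM, Set.mem_iUnion.2
      ⟨fun j i => !decide (z j i = x i), ?_⟩⟩⟩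
    refine ⟨(∑ i, x i, fun i => y i - x i), ?_⟩
    funext j
    simp only [LmapAux, LinearMap.coe_mk, AddHom.coe_mk]
    rw [hsum j, ← Finset.sum_add_distrib]
    apply Finset.sum_congr rfl
    intro i _
    by_cases h : z j i = x i
    · rw [if_neg (by simp [h]), h]; ring
    · have hzy : z j i = y i := (hz j i).resolve_left h
      rw [if_pos (by simp [h]), hzy]; ring
  refine MeasureTheory.measure_mono_null key ?_
  refine MeasureTheory.measure_iUnion_null fun θ => ?_
  refine MeasureTheory.measure_iUnion_null fun hθ => ?_
  refine MeasureTheory.measure_iUnion_null fun E => ?_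
  apply MeasureTheory.Measure.addHaar_submodule
  intro htop
  have h1 : Module.finrank ℝ (Fin M → ℝ) ≤ Module.finrank ℝ (ℝ × (Fin θ → ℝ)) := by
    calc Module.finrank ℝ (Fin M → ℝ)
        = Module.finrank ℝ (LinearMap.range (LmapAux M θ E)) := by rw [htop, finrank_top]
      _ ≤ _ := LinearMap.finrank_range_le _
  simp [Module.finrank_pi] at h1
  omega
end

section
/- For every integer M ≥ 5, there exists a real number x with x ∉ {0, 1, −1} such that the geometric progression {1, x, x², …, x^{M−1}} has M distinct elements and complexity at most M−2, i.e., strictly less than the highest possible complexity M−1. -/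
open Finset

theorem complexity_le_of_subset_add_subsetSum {θ : ℕ} (hθ : 0 < θ) (c : ℝ) (d : Fin θ → ℝ)
    {A : Set ℝ} (hA : A ⊆ {t | ∃ s : Finset (Fin θ), t = c + ∑ i ∈ s, d i}) :
    complexity A ≤ θ := by
  refine Nat.sInf_le ⟨hθ, fun _ => c / θ, fun i => c / θ + d i, fun t ht => ?_⟩
  obtain ⟨s, rfl⟩ := hA ht
  refine ⟨fun i => c / θ + if i ∈ s then d i else 0, fun i => ?_, ?_⟩
  · by_cases hi : i ∈ s <;> simp [hi]
  · rw [sum_add_distrib, sum_const, card_univ, Fintype.card_fin, nsmul_eq_mul,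
      mul_div_cancel₀ _ (by positivity), sum_ite_mem, univ_inter]

theorem geom_sum_Ico_two_eq_one_iff {K : Type*} [Field K] {x : K} (hx : x ≠ 1) {n : ℕ}
    (hn : 2 ≤ n) : ∑ i ∈ Ico 2 n, x ^ i = 1 ↔ x ^ n = x ^ 2 + x - 1 := by
  rw [geom_sum_Ico hx hn, div_eq_one_iff_eq (sub_ne_zero.mpr hx)]
  constructor <;> intro h <;> linear_combination h

theorem exists_pow_eq_sq_add_sub_one {n : ℕ} (hn : 4 ≤ n) :
    ∃ x ∈ Set.Ioo (0 : ℝ) 1, x ^ n = x ^ 2 + x - 1 := by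
  set f : ℝ → ℝ := fun x => ∑ i ∈ Ico 2 n, x ^ i
  have hf0 : f 0 = 0 := sum_eq_zero fun i hi => zero_pow (by grind)
  have hf1 : (1 : ℝ) < f 1 := by
    simp only [f, one_pow, sum_const, Nat.card_Ico, nsmul_one]
    exact_mod_cast (by omega : 1 < n - 2)
  obtain ⟨x, ⟨hx0, hx1⟩, hfx⟩ := intermediate_value_Ioo zero_le_one
    (continuous_finsetSum _ fun i _ => continuous_pow i).continuousOn
    (by rw [hf0]; exact ⟨zero_lt_one, hf1⟩ : (1 : ℝ) ∈ Set.Ioo (f 0) (f 1))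
  exact ⟨x, ⟨hx0, hx1⟩, (geom_sum_Ico_two_eq_one_iff hx1.ne (by omega)).mp hfx⟩

theorem ncard_setOf_pow_lt {R : Type*} [Semiring R] [LinearOrder R] [IsStrictOrderedRing R]
    {x : R} (hx₀ : 0 < x) (hx₁ : x ≠ 1) (M : ℕ) : {t : R | ∃ i < M, t = x ^ i}.ncard = M := by
  have : {t : R | ∃ i < M, t = x ^ i} = (x ^ ·) '' Set.Iio M := by
    ext; simp [eq_comm]
  rw [this, Set.ncard_image_of_injective _ (pow_right_injective₀ hx₀ hx₁), Set.ncard_Iio_nat]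

theorem complexity_setOf_pow_lt_le {M : ℕ} (hM : 4 ≤ M) {x : ℝ}
    (hx : x ^ (M - 1) = x ^ 2 + x - 1) :
    complexity {t : ℝ | ∃ i < M, t = x ^ i} ≤ M - 2 := by
  refine complexity_le_of_subset_add_subsetSum (by omega) 1 (fun i => x ^ (i.1 + 1) - 1) ?_
  rintro t ⟨k, hk, rfl⟩
  rcases Nat.eq_zero_or_pos k with rfl | hk0
  · exact ⟨∅, by simp⟩
  rcases Nat.lt_or_ge k (M - 1) with hk1 | hk1
  · refine ⟨{⟨k - 1, by omega⟩}, ?_⟩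
    rw [sum_singleton, Nat.sub_add_cancel hk0]
    ring
  · refine ⟨{⟨0, by omega⟩, ⟨1, by omega⟩}, ?_⟩
    rw [sum_pair (by simp), show k = M - 1 by omega, hx]
    ring

/-- For every `M ≥ 5` there is a geometric progression `{1, x, ..., x^(M-1)}` of `M`
distinct elements whose complexity is at most `M - 2`. -/
theorem stmt_15 (M : ℕ) (hM : 5 ≤ M) :
    ∃ x : ℝ, x ≠ 0 ∧ x ≠ 1 ∧ x ≠ -1 ∧
      ({t : ℝ | ∃ i : ℕ, i < M ∧ t = x ^ i}.ncard = M) ∧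
      complexity {t : ℝ | ∃ i : ℕ, i < M ∧ t = x ^ i} ≤ M - 2 := by
  obtain ⟨x, ⟨hx₀, hx₁⟩, hx⟩ := exists_pow_eq_sq_add_sub_one (n := M - 1) (by omega)
  exact ⟨x, hx₀.ne', hx₁.ne, by linarith, ncard_setOf_pow_lt hx₀ hx₁.ne M,
    complexity_setOf_pow_lt_le (by omega) hx⟩
end

section
/- Let A ⊆ ℝ be a finite set with |A| = M ≥ 4, and suppose there exist four pairwise distinct elements a₁, a₂, b₁, b₂ ∈ A with a₁ + b₁ = a₂ + b₂ (i.e., A is not an almost-Sidon set). Then C(A) ≤ M − 2; equivalently, every set of size M with the highest possible complexity M−1 is an almost-Sidon set. -/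
/-- If a set of size `M ≥ 4` is not an almost-Sidon set (it has four pairwise distinct
elements with `a₁ + b₁ = a₂ + b₂`), then its complexity is at most `M - 2`. -/
theorem stmt_16 (A : Finset ℝ) (M : ℕ) (hM : 4 ≤ M) (hcard : A.card = M)
    (a₁ a₂ b₁ b₂ : ℝ) (ha₁ : a₁ ∈ A) (ha₂ : a₂ ∈ A) (hb₁ : b₁ ∈ A) (hb₂ : b₂ ∈ A)
    (h₁ : a₁ ≠ a₂) (h₂ : a₁ ≠ b₁) (h₃ : a₁ ≠ b₂) (h₄ : a₂ ≠ b₁) (h₅ : a₂ ≠ b₂)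
    (h₆ : b₁ ≠ b₂) (hsum : a₁ + b₁ = a₂ + b₂) :
    complexity ↑A ≤ M - 2 := by
  classical
  set S : Finset ℝ := {a₁, a₂, b₁, b₂} with hS
  have hScard : S.card = 4 := by
    rw [hS]
    rw [Finset.card_insert_of_notMem (by simp [h₁, h₂, h₃]),
        Finset.card_insert_of_notMem (by simp [h₄, h₅]),
        Finset.card_insert_of_notMem (by simp [h₆]), Finset.card_singleton]
  have hSsub : S ⊆ A := by
    intro t ht
    simp only [hS, Finset.mem_insert, Finset.mem_singleton] at ht
    rcases ht with h|h|h|h <;> subst h <;> assumption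
  set k := M - 4 with hk
  have hBcard : (A \ S).card = k := by
    rw [Finset.card_sdiff_of_subset hSsub, hScard, hcard]
  let e : Fin k → ℝ := fun i => ((A \ S).orderIsoOfFin hBcard i : ℝ)
  have he : ∀ c ∈ A \ S, ∃ i, e i = c := by
    intro c hc
    obtain ⟨i, hi⟩ := ((A \ S).orderIsoOfFin hBcard).surjective ⟨c, hc⟩
    exact ⟨i, by exact congrArg Subtype.val hi⟩
  have hM2 : M - 2 = k + 2 := by omega
  rw [hM2]
  apply Nat.sInf_le
  refine ⟨by omega, Fin.cons 0 (Fin.cons a₁ fun _ => 0),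
    Fin.cons (b₂ - a₁) (Fin.cons a₂ fun i => e i - a₁), ?_⟩
  intro t ht
  simp only [Set.mem_setOf_eq]
  rw [Finset.mem_coe] at ht
  by_cases hmem : t ∈ S
  · simp only [hS, Finset.mem_insert, Finset.mem_singleton] at hmem
    rcases hmem with h|h|h|h
    · exact ⟨Fin.cons 0 (Fin.cons a₁ fun _ => 0), fun i => Or.inl rfl,
        by simp [Fin.sum_cons]; linarith⟩
    · refine ⟨Fin.cons 0 (Fin.cons a₂ fun _ => 0), ?_, by simp [Fin.sum_cons]; linarith⟩
      intro i
      induction i using Fin.cases with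
      | zero => exact Or.inl (by simp)
      | succ j =>
        induction j using Fin.cases with
        | zero => exact Or.inr (by simp)
        | succ l => exact Or.inl (by simp)
    · refine ⟨Fin.cons (b₂ - a₁) (Fin.cons a₂ fun _ => 0), ?_, ?_⟩
      · intro i
        induction i using Fin.cases with
        | zero => exact Or.inr (by simp)
        | succ j =>
          induction j using Fin.cases with
          | zero => exact Or.inr (by simp)
          | succ l => exact Or.inl (by simp)
      · simp [Fin.sum_cons]; linarith
    · refine ⟨Fin.cons (b₂ - a₁) (Fin.cons a₁ fun _ => 0), ?_,
        by simp [Fin.sum_cons]; linarith⟩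
      intro i
      induction i using Fin.cases with
      | zero => exact Or.inr (by simp)
      | succ j =>
        induction j using Fin.cases with
        | zero => exact Or.inl (by simp)
        | succ l => exact Or.inl (by simp)
  · have htB : t ∈ A \ S := Finset.mem_sdiff.2 ⟨ht, hmem⟩
    obtain ⟨j, hj⟩ := he t htB
    refine ⟨Fin.cons 0 (Fin.cons a₁ fun i => if i = j then e j - a₁ else 0), ?_, ?_⟩
    · intro i
      induction i using Fin.cases with
      | zero => exact Or.inl (by simp)
      | succ j' =>
        induction j' using Fin.cases with
        | zero => exact Or.inl (by simp)
        | succ l =>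
          by_cases hl : l = j
          · subst hl; exact Or.inr (by simp)
          · exact Or.inl (by simp [hl])
    · simp [Fin.sum_cons, Finset.sum_ite_eq' Finset.univ j]
      linarith [hj]
end

section
/- For every integer m ≥ 3, setting M = 2^m − 1, there exists a set A ⊆ ℝ with |A| = M such that A is an almost-Sidon set and C(A) ≤ 2m + 1. In particular, there exist almost-Sidon sets of size M whose complexity is O(log₂ M), far below the highest possible complexity M−1. -/
def IsAlmostSidon (A : Finset ℝ) : Prop :=
  ∀ a₁ a₂ b₁ b₂ : ℝ, a₁ ∈ A → a₂ ∈ A → b₁ ∈ A → b₂ ∈ A →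
    a₁ ≠ a₂ → a₁ ≠ b₁ → a₁ ≠ b₂ → a₂ ≠ b₁ → a₂ ≠ b₂ → b₁ ≠ b₂ → a₁ + b₁ ≠ a₂ + b₂

section Quaternary

variable {n : ℕ}

noncomputable def quaternaryEmbedding (v : Fin n → ZMod 2) : ℝ :=
  ∑ i, ((v i).val : ℝ) * 4 ^ (i : ℕ)

lemma add_eq_add_of_quaternaryEmbedding_add_eq {u v u' v' : Fin n → ZMod 2}
    (h : quaternaryEmbedding u + quaternaryEmbedding v =
      quaternaryEmbedding u' + quaternaryEmbedding v') : u + v = u' + v' := by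
  let digitSum (u v : Fin n → ZMod 2) (i : Fin n) : Fin 4 :=
    ⟨(u i).val + (v i).val, by have := (u i).val_lt; have := (v i).val_lt; omega⟩
  have hdigits : digitSum u v = digitSum u' v' := by
    refine finFunctionFinEquiv.injective (Fin.ext ?_)
    simp only [finFunctionFinEquiv_apply]
    simp only [quaternaryEmbedding, ← Finset.sum_add_distrib, ← add_mul] at h
    exact_mod_cast h
  funext i
  simpa [digitSum, ZMod.natCast_zmod_val] using
    congrArg (fun d : Fin n → Fin 4 => ((d i : ℕ) : ZMod 2)) hdigits

lemma quaternaryEmbedding_injective :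
    Function.Injective (quaternaryEmbedding : (Fin n → ZMod 2) → ℝ) := fun u u' h => by
  simpa using add_eq_add_of_quaternaryEmbedding_add_eq (v := 0) (v' := 0) (by rw [h])

lemma complexity_image_quaternaryEmbedding_le (hn : 0 < n) (S : Set (Fin n → ZMod 2)) :
    complexity (quaternaryEmbedding '' S) ≤ n := by
  refine Nat.sInf_le ⟨hn, 0, fun i => 4 ^ (i : ℕ), ?_⟩
  rintro _ ⟨v, -, rfl⟩
  refine ⟨fun i => ((v i).val : ℝ) * 4 ^ (i : ℕ), fun i => ?_, rfl⟩
  rcases (show (v i).val = 0 ∨ (v i).val = 1 by have := (v i).val_lt; omega) with h | h <;>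
    simp [h]

end Quaternary

lemma eq_or_eq_of_add_eq_add_of_cube_add_eq {F : Type*} [Field F] [CharP F 2] {x y x' y' : F}
    (hxy : x ≠ y) (hs : x + y = x' + y') (hc : x ^ 3 + y ^ 3 = x' ^ 3 + y' ^ 3) :
    x = x' ∨ x = y' := by
  have h2 : (2 : F) = 0 := CharTwo.two_eq_zero
  have hsum : x + y ≠ 0 := fun h => hxy (by linear_combination h - y * h2)
  -- in characteristic 2, `x³ + y³ = (x + y)³ + (x + y) x y`, so the products agree as well
  have hprod : x * y = x' * y' := by
    refine mul_left_cancel₀ hsum ?_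
    linear_combination ((x + y) ^ 2 + (x + y) * (x' + y') + (x' + y') ^ 2 - 3 * x' * y') * hs - hc
      - ((x + y) * (x * y) - (x + y) * (x' * y')) * h2
  have hroots : (x - x') * (x - y') = 0 := by linear_combination x * hs - hprod
  rcases mul_eq_zero.1 hroots with h | h
  · exact Or.inl (sub_eq_zero.1 h)
  · exact Or.inr (sub_eq_zero.1 h)

section CubeEmbedding

variable {F : Type*} [Field F] {n : ℕ}

noncomputable def cubeEmbedding (e : F × F ≃+ (Fin n → ZMod 2)) (w : F) : ℝ :=
  quaternaryEmbedding (e (w, w ^ 3))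

lemma cubeEmbedding_injective (e : F × F ≃+ (Fin n → ZMod 2)) :
    Function.Injective (cubeEmbedding e) := fun _ _ h =>
  congrArg Prod.fst (e.injective (quaternaryEmbedding_injective h))

lemma add_eq_add_of_cubeEmbedding_add_eq (e : F × F ≃+ (Fin n → ZMod 2)) {u v u' v' : F}
    (h : cubeEmbedding e u + cubeEmbedding e v = cubeEmbedding e u' + cubeEmbedding e v') :
    u + v = u' + v' ∧ u ^ 3 + v ^ 3 = u' ^ 3 + v' ^ 3 := by
  have hcode := add_eq_add_of_quaternaryEmbedding_add_eq h
  rw [← map_add, ← map_add] at hcode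
  simpa only [Prod.mk_add_mk, Prod.mk.injEq] using e.injective hcode

variable [CharP F 2]

lemma isAlmostSidon_image_cubeEmbedding (e : F × F ≃+ (Fin n → ZMod 2)) [DecidableEq ℝ]
    (s : Finset F) : IsAlmostSidon (s.image (cubeEmbedding e)) := by
  simp only [IsAlmostSidon, Finset.mem_image]
  rintro _ _ _ _ ⟨u, -, rfl⟩ ⟨u', -, rfl⟩ ⟨v, -, rfl⟩ ⟨v', -, rfl⟩ huu' huv huv' - - - hsum
  obtain ⟨hs, hc⟩ := add_eq_add_of_cubeEmbedding_add_eq e hsum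
  rcases eq_or_eq_of_add_eq_add_of_cube_add_eq (fun h => huv (congrArg _ h)) hs hc with rfl | rfl
  · exact huu' rfl
  · exact huv' rfl

lemma exists_isAlmostSidon_card_complexity_le [Fintype F] (hn : 0 < n)
    (e : F × F ≃+ (Fin n → ZMod 2)) :
    ∃ A : Finset ℝ, A.card = Fintype.card F - 1 ∧ IsAlmostSidon A ∧ complexity A ≤ n := by
  classical
  refine ⟨(Finset.univ.erase 0).image (cubeEmbedding e), ?_,
    isAlmostSidon_image_cubeEmbedding e _, ?_⟩
  · rw [Finset.card_image_of_injective _ (cubeEmbedding_injective e),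
      Finset.card_erase_of_mem (Finset.mem_univ _), Finset.card_univ]
  · rw [Finset.coe_image,
      show cubeEmbedding e = quaternaryEmbedding ∘ fun w => e (w, w ^ 3) from rfl, Set.image_comp]
    exact complexity_image_quaternaryEmbedding_le hn _

end CubeEmbedding

/-- For every `m ≥ 3` there exists an almost-Sidon set of size `2^m - 1` with complexity
at most `2m + 1`. -/
theorem stmt_17 (m : ℕ) (hm : 3 ≤ m) :
    ∃ A : Finset ℝ, A.card = 2 ^ m - 1 ∧
      (∀ a₁ a₂ b₁ b₂ : ℝ, a₁ ∈ A → a₂ ∈ A → b₁ ∈ A → b₂ ∈ A →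
        a₁ ≠ a₂ → a₁ ≠ b₁ → a₁ ≠ b₂ → a₂ ≠ b₁ → a₂ ≠ b₂ → b₁ ≠ b₂ →
        a₁ + b₁ ≠ a₂ + b₂) ∧
      complexity ↑A ≤ 2 * m + 1 := by
  have hm0 : m ≠ 0 := by omega
  let F := GaloisField 2 m
  let _ : Fintype F := Fintype.ofFinite F
  have hrank : Module.finrank (ZMod 2) (F × F) = m + m := by
    rw [Module.finrank_prod, GaloisField.finrank 2 hm0]
  let e := (Module.finBasisOfFinrankEq (ZMod 2) (F × F) hrank).equivFun.toAddEquiv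
  obtain ⟨A, hcard, hsidon, hcomplexity⟩ := exists_isAlmostSidon_card_complexity_le (by omega) e
  refine ⟨A, ?_, hsidon, by omega⟩
  rw [hcard, Fintype.card_eq_nat_card, GaloisField.card 2 m hm0]
end
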